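/- arXiv:1205.1284 — 7 statements merged into one kernel-verified Lean document; each statement's English description precedes it below -/
import Mathlib

section
/- For any two i.i.d. real-valued random variables X and Y with finite first moments, E|X-Y| ≤ E|X+Y|. -/
open MeasureTheory ProbabilityTheory Set Function

/-!
With `g t x = sign x · 1{t < |x|}` one has
`|a + b| - |a - b| = 2 sign a sign b min |a| |b| = 2 ∫_{t > 0} g t a · g t b dt`.
Taking expectations and exchanging the integrals, independence turns the inner expectation into
`E[g t X] E[g t Y] = E[g t X]²`, so `E|X + Y| - E|X - Y| = 2 ∫_{t > 0} E[g t X]² dt ≥ 0`.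
-/

namespace ProbabilityTheory

theorem IndepFun.integral_integral_mul_comp_nonneg {Ω E T : Type*} [MeasurableSpace Ω]
    [MeasurableSpace E] [MeasurableSpace T] {μ : Measure Ω} {ν : Measure T} [SFinite μ] [SFinite ν]
    {X Y : Ω → E} {f : T → E → ℝ} (hXY : IndepFun X Y μ) (hid : IdentDistrib X Y μ μ)
    (hf : ∀ t, Measurable (f t))
    (hint : Integrable (fun p : Ω × T => f p.2 (X p.1) * f p.2 (Y p.1)) (μ.prod ν)) :
    0 ≤ ∫ ω, ∫ t, f t (X ω) * f t (Y ω) ∂ν ∂μ := by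
  rw [integral_integral_swap hint]
  refine integral_nonneg fun t => ?_
  have hfX := ((hf t).comp_aemeasurable hid.aemeasurable_fst).aestronglyMeasurable
  have hfY := ((hf t).comp_aemeasurable hid.aemeasurable_snd).aestronglyMeasurable
  have hsame : ∫ ω, f t (X ω) ∂μ = ∫ ω, f t (Y ω) ∂μ := (hid.comp (hf t)).integral_eq
  calc (0 : ℝ) ≤ (∫ ω, f t (X ω) ∂μ) * ∫ ω, f t (Y ω) ∂μ := hsame ▸ mul_self_nonneg _
    _ = ∫ ω, f t (X ω) * f t (Y ω) ∂μ :=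
      ((hXY.comp (hf t) (hf t)).integral_fun_mul_eq_mul_integral hfX hfY).symm

end ProbabilityTheory

theorem Real.measurable_sign : Measurable Real.sign :=
  measurable_const.ite measurableSet_Iio (measurable_const.ite measurableSet_Ioi measurable_const)

theorem abs_add_sub_abs_sub (a b : ℝ) :
    |a + b| - |a - b| = 2 * (Real.sign a * Real.sign b * min |a| |b|) := by
  rcases lt_trichotomy a 0 with ha | ha | ha <;> rcases lt_trichotomy b 0 with hb | hb | hb <;>
    simp [Real.sign_of_pos, Real.sign_of_neg, ha, hb, abs_of_pos, abs_of_neg] <;> grind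

theorem setIntegral_Ioi_indicator_Iio_const {c : ℝ} (hc : 0 ≤ c) (k : ℝ) :
    ∫ t in Ioi 0, (Iio c).indicator (fun _ => k) t = c * k := by
  rw [integral_indicator_const _ measurableSet_Iio, measureReal_restrict_apply measurableSet_Iio,
    Iio_inter_Ioi, Real.volume_real_Ioo_of_le hc, sub_zero, smul_eq_mul]

theorem integrableOn_Ioi_indicator_Iio_const (c k : ℝ) :
    IntegrableOn ((Iio c).indicator fun _ => k) (Ioi 0) := by
  refine (integrable_indicator_iff measurableSet_Iio).2 (integrableOn_const ?_)
  rw [Measure.restrict_apply measurableSet_Iio, Iio_inter_Ioi]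
  exact measure_Ioo_lt_top.ne

noncomputable def signCutoff (t x : ℝ) : ℝ := if t < |x| then Real.sign x else 0

theorem measurable_signCutoff : Measurable (uncurry signCutoff) :=
  (Real.measurable_sign.comp measurable_snd).ite
    (measurableSet_lt measurable_fst measurable_snd.abs) measurable_const

theorem signCutoff_mul_signCutoff (t a b : ℝ) :
    signCutoff t a * signCutoff t b
      = (Iio (min |a| |b|)).indicator (fun _ => Real.sign a * Real.sign b) t := by
  simp only [signCutoff, indicator, mem_Iio, lt_min_iff]
  split_ifs <;> simp_all

theorem integral_signCutoff_mul_signCutoff (a b : ℝ) :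
    ∫ t in Ioi 0, signCutoff t a * signCutoff t b = (|a + b| - |a - b|) / 2 := by
  simp only [signCutoff_mul_signCutoff]
  rw [setIntegral_Ioi_indicator_Iio_const (by positivity), abs_add_sub_abs_sub]
  ring

theorem integrable_signCutoff_mul_signCutoff {Ω : Type*} [MeasurableSpace Ω] {μ : Measure Ω}
    [SFinite μ] {X Y : Ω → ℝ} (hX : Integrable X μ) (hY : AEMeasurable Y μ) :
    Integrable (fun p : Ω × ℝ => signCutoff p.2 (X p.1) * signCutoff p.2 (Y p.1))
      (μ.prod (volume.restrict (Ioi 0))) := by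
  have hcomp : ∀ {Z : Ω → ℝ}, AEMeasurable Z μ →
      AEMeasurable (fun p : Ω × ℝ => signCutoff p.2 (Z p.1)) (μ.prod (volume.restrict (Ioi 0))) :=
    fun hZ =>
      measurable_signCutoff.comp_aemeasurable (measurable_snd.aemeasurable.prodMk hZ.comp_fst)
  have hF : AEStronglyMeasurable (fun p : Ω × ℝ => signCutoff p.2 (X p.1) * signCutoff p.2 (Y p.1))
      (μ.prod (volume.restrict (Ioi 0))) :=
    ((hcomp hX.aemeasurable).mul (hcomp hY)).aestronglyMeasurable
  have hsign : ∀ a b : ℝ, ‖Real.sign a * Real.sign b‖ ≤ 1 := fun a b => by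
    rcases Real.sign_apply_eq a with ha | ha | ha <;>
      rcases Real.sign_apply_eq b with hb | hb | hb <;> simp [ha, hb]
  refine (integrable_prod_iff hF).2
    ⟨.of_forall fun ω => ?_, hX.abs.mono' hF.norm.integral_prod_right' (.of_forall fun ω => ?_)⟩
  · simp only [signCutoff_mul_signCutoff]
    exact integrableOn_Ioi_indicator_Iio_const _ _
  · simp only [signCutoff_mul_signCutoff, norm_indicator_eq_indicator_norm]
    rw [setIntegral_Ioi_indicator_Iio_const (by positivity), norm_mul, norm_norm,
      Real.norm_of_nonneg (by positivity)]
    calc min |X ω| |Y ω| * ‖Real.sign (X ω) * Real.sign (Y ω)‖ ≤ |X ω| * 1 := by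
          gcongr
          exacts [min_le_left _ _, hsign _ _]
      _ = |X ω| := mul_one _

theorem abs_diff_exp_le_abs_sum_exp
    {Ω : Type*} [MeasurableSpace Ω] {μ : Measure Ω} [IsProbabilityMeasure μ]
    (X Y : Ω → ℝ) (hindep : IndepFun X Y μ) (hid : IdentDistrib X Y μ μ)
    (hint : Integrable X μ) :
    ∫ ω, |X ω - Y ω| ∂μ ≤ ∫ ω, |X ω + Y ω| ∂μ := by
  have hintY : Integrable Y μ := hid.integrable_iff.1 hint
  have hnonneg := hindep.integral_integral_mul_comp_nonneg (f := signCutoff) hid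
    (fun _ => measurable_signCutoff.of_uncurry_left)
    (integrable_signCutoff_mul_signCutoff hint hintY.aemeasurable)
  simp only [integral_signCutoff_mul_signCutoff] at hnonneg
  have hsum : Integrable (fun ω => |X ω + Y ω|) μ := (hint.add hintY).abs
  have hdiff : Integrable (fun ω => |X ω - Y ω|) μ := (hint.sub hintY).abs
  rw [integral_div, integral_sub hsum hdiff] at hnonneg
  linarith
end

section
/- Let ψ: ℝⁿ → ℝ be given by ψ(ξ) = ∫_{ℝⁿ∖{0}} (1 - cos⟨ξ,u⟩) ν(du), where ν is a Lévy measure (i.e. ∫ min{‖u‖₂², 1} ν(du) < ∞). Then for any i.i.d. random vectors X, Y in ℝⁿ, E ψ(X-Y) ≤ E ψ(X+Y). -/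
open MeasureTheory ProbabilityTheory
open scoped ENNReal RealInnerProductSpace

open ComplexConjugate

/-! Since `ψ` is a `ν`-mixture of the functions `1 - cos ⟪·, u⟫`, Tonelli reduces the claim to
`E cos ⟪X + Y, u⟫ ≤ E cos ⟪X - Y, u⟫` for each `u`. With `φ` the characteristic function of `X`
(and of `Y`), independence makes the left side `Re (φ u ^ 2)` and the right side `‖φ u‖ ^ 2`. -/

theorem MeasureTheory.sFinite_restrict_support_of_lintegral_ne_top {α : Type*}
    [MeasurableSpace α] {μ : Measure α} {f : α → ℝ≥0∞} (hf : Measurable f)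
    (hint : ∫⁻ x, f x ∂μ ≠ ∞) : SFinite (μ.restrict (Function.support f)) := by
  have hS : MeasurableSet (Function.support f) := hf (measurableSet_singleton 0).compl
  have : IsFiniteMeasure (μ.withDensity f) := isFiniteMeasure_withDensity hint
  refine sFinite_of_absolutelyContinuous (ν := μ.withDensity f) ?_
  have hac : μ.restrict (Function.support f) ≪ (μ.restrict (Function.support f)).withDensity f :=
    withDensity_absolutelyContinuous' hf.aemeasurable
      (ae_restrict_of_forall_mem hS fun _ hx => hx)
  rw [← restrict_withDensity hS] at hac
  exact hac.trans (Measure.absolutelyContinuous_of_le Measure.restrict_le_self)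

theorem one_sub_cos_inner_le {E : Type*} [NormedAddCommGroup E] [InnerProductSpace ℝ E]
    (z u : E) : 1 - Real.cos ⟪z, u⟫ ≤ (‖z‖ ^ 2 + 2) * min (‖u‖ ^ 2) 1 := by
  rcases le_total (‖u‖ ^ 2) 1 with hu | hu
  · have hcos := Real.one_sub_sq_div_two_le_cos (x := ⟪z, u⟫)
    have hCS : ⟪z, u⟫ ^ 2 ≤ ‖z‖ ^ 2 * ‖u‖ ^ 2 := by
      rw [← mul_pow, ← sq_abs]
      exact pow_le_pow_left₀ (abs_nonneg _) (abs_real_inner_le_norm z u) 2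
    rw [min_eq_left hu]
    nlinarith [sq_nonneg ‖u‖, sq_nonneg ⟪z, u⟫]
  · rw [min_eq_right hu]
    nlinarith [Real.neg_one_le_cos ⟪z, u⟫, sq_nonneg ‖z‖]

theorem sFinite_of_lintegral_ofReal_min_sq_norm_one_lt_top {E : Type*} [NormedAddCommGroup E]
    [MeasurableSpace E] [BorelSpace E] {ν : Measure E}
    (hν : ∫⁻ u, ENNReal.ofReal (min (‖u‖ ^ 2) 1) ∂ν < ∞) : SFinite ν := by
  have hsupp : Function.support (fun u : E => ENNReal.ofReal (min (‖u‖ ^ 2) 1)) = {0}ᶜ := by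
    ext u
    simp
  have := sFinite_restrict_support_of_lintegral_ne_top (by fun_prop) hν.ne
  rw [hsupp] at this
  rw [← Measure.restrict_add_restrict_compl (μ := ν) (measurableSet_singleton 0),
    Measure.restrict_singleton]
  infer_instance

section LevyMeasure

variable {E : Type*} [NormedAddCommGroup E] [InnerProductSpace ℝ E]
  [MeasurableSpace E] {ν : Measure E}

theorem lintegral_ofReal_one_sub_cos_inner_lt_top
    (hν : ∫⁻ u, ENNReal.ofReal (min (‖u‖ ^ 2) 1) ∂ν < ∞) (z : E) :
    ∫⁻ u, ENNReal.ofReal (1 - Real.cos ⟪z, u⟫) ∂ν < ∞ :=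
  calc ∫⁻ u, ENNReal.ofReal (1 - Real.cos ⟪z, u⟫) ∂ν
      ≤ ∫⁻ u, ENNReal.ofReal (‖z‖ ^ 2 + 2) * ENNReal.ofReal (min (‖u‖ ^ 2) 1) ∂ν :=
        lintegral_mono fun u => by
          rw [← ENNReal.ofReal_mul (by positivity)]
          exact ENNReal.ofReal_le_ofReal (one_sub_cos_inner_le z u)
    _ = ENNReal.ofReal (‖z‖ ^ 2 + 2) * ∫⁻ u, ENNReal.ofReal (min (‖u‖ ^ 2) 1) ∂ν :=
        lintegral_const_mul' _ _ ENNReal.ofReal_ne_top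
    _ < ∞ := ENNReal.mul_lt_top ENNReal.ofReal_lt_top hν

variable [BorelSpace E]

theorem ofReal_integral_one_sub_cos_inner
    (hν : ∫⁻ u, ENNReal.ofReal (min (‖u‖ ^ 2) 1) ∂ν < ∞) (z : E) :
    ENNReal.ofReal (∫ u, (1 - Real.cos ⟪z, u⟫) ∂ν)
      = ∫⁻ u, ENNReal.ofReal (1 - Real.cos ⟪z, u⟫) ∂ν := by
  rw [integral_eq_lintegral_of_nonneg_ae
      (ae_of_all _ fun u => sub_nonneg.mpr (Real.cos_le_one _)) (by fun_prop),
    ENNReal.ofReal_toReal (lintegral_ofReal_one_sub_cos_inner_lt_top hν z).ne]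

end LevyMeasure

section CharFun

variable {E : Type*} [NormedAddCommGroup E] [InnerProductSpace ℝ E]
  [MeasurableSpace E] [BorelSpace E]

theorem re_charFun_eq_integral_cos (ρ : Measure E) [IsFiniteMeasure ρ] (t : E) :
    (charFun ρ t).re = ∫ x, Real.cos ⟪x, t⟫ ∂ρ := by
  have hint : Integrable (fun x => Complex.exp (⟪x, t⟫ * Complex.I)) ρ :=
    Integrable.of_bound (by fun_prop) 1
      (ae_of_all _ fun x => (Complex.norm_exp_ofReal_mul_I _).le)
  rw [charFun_apply, ← RCLike.re_eq_complex_re, ← integral_re hint]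
  simp only [RCLike.re_eq_complex_re, Complex.exp_ofReal_mul_I_re]

theorem lintegral_ofReal_one_sub_cos_inner_eq_re_charFun (ρ : Measure E) [IsProbabilityMeasure ρ]
    (t : E) :
    ∫⁻ x, ENNReal.ofReal (1 - Real.cos ⟪x, t⟫) ∂ρ = ENNReal.ofReal (1 - (charFun ρ t).re) := by
  have hcos : Integrable (fun x => Real.cos ⟪x, t⟫) ρ :=
    Integrable.of_bound (by fun_prop) 1 (ae_of_all _ fun x => by
      simpa only [Real.norm_eq_abs] using Real.abs_cos_le_one _)
  rw [← ofReal_integral_eq_lintegral_ofReal (f := fun x => 1 - Real.cos ⟪x, t⟫)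
      ((integrable_const 1).sub hcos)
      (ae_of_all _ fun x => sub_nonneg.mpr (Real.cos_le_one _)),
    integral_sub (integrable_const 1) hcos, re_charFun_eq_integral_cos]
  simp

variable [SecondCountableTopology E] {Ω : Type*} [MeasurableSpace Ω] {μ : Measure Ω}
  {X Y : Ω → E}

theorem ProbabilityTheory.IndepFun.charFun_map_sub_eq_mul_conj [IsFiniteMeasure μ]
    (hX : AEMeasurable X μ) (hY : AEMeasurable Y μ) (hXY : IndepFun X Y μ) (t : E) :
    charFun (μ.map (X - Y)) t = charFun (μ.map X) t * conj (charFun (μ.map Y) t) := by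
  have hneg : IndepFun X (fun ω => (-1 : ℝ) • Y ω) μ :=
    hXY.comp measurable_id (measurable_const_smul _)
  have hsub : X - Y = fun ω => X ω + (-1 : ℝ) • Y ω := by
    ext ω; simp [sub_eq_add_neg]
  rw [hsub, hneg.charFun_map_fun_add_eq_mul hX (by fun_prop), Pi.mul_apply,
    charFun_map_smul_comp hY, neg_one_smul, charFun_neg]

theorem ProbabilityTheory.IdentDistrib.re_charFun_map_add_le_re_charFun_map_sub
    [IsFiniteMeasure μ] (hXY : IndepFun X Y μ) (hid : IdentDistrib X Y μ μ) (t : E) :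
    (charFun (μ.map (X + Y)) t).re ≤ (charFun (μ.map (X - Y)) t).re := by
  rw [hXY.charFun_map_add_eq_mul hid.aemeasurable_fst hid.aemeasurable_snd,
    hXY.charFun_map_sub_eq_mul_conj hid.aemeasurable_fst hid.aemeasurable_snd, hid.map_eq,
    Pi.mul_apply, Complex.mul_conj']
  calc (charFun (μ.map Y) t * charFun (μ.map Y) t).re
      ≤ ‖charFun (μ.map Y) t * charFun (μ.map Y) t‖ := Complex.re_le_norm _
    _ = ((‖charFun (μ.map Y) t‖ : ℂ) ^ 2).re := by
        rw [norm_mul, ← Complex.ofReal_pow, Complex.ofReal_re, sq]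

theorem lintegral_ofReal_integral_one_sub_cos_inner_comp [IsProbabilityMeasure μ]
    {ν : Measure E} (hν : ∫⁻ u, ENNReal.ofReal (min (‖u‖ ^ 2) 1) ∂ν < ∞)
    {Z : Ω → E} (hZ : AEMeasurable Z μ) :
    ∫⁻ ω, ENNReal.ofReal (∫ u, (1 - Real.cos ⟪Z ω, u⟫) ∂ν) ∂μ
      = ∫⁻ u, ENNReal.ofReal (1 - (charFun (μ.map Z) u).re) ∂ν := by
  have : SFinite ν := sFinite_of_lintegral_ofReal_min_sq_norm_one_lt_top hν
  have : IsProbabilityMeasure (μ.map Z) := Measure.isProbabilityMeasure_map hZ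
  calc ∫⁻ ω, ENNReal.ofReal (∫ u, (1 - Real.cos ⟪Z ω, u⟫) ∂ν) ∂μ
      = ∫⁻ x, ∫⁻ u, ENNReal.ofReal (1 - Real.cos ⟪x, u⟫) ∂ν ∂(μ.map Z) := by
        have hF : Measurable fun x : E => ∫⁻ u, ENNReal.ofReal (1 - Real.cos ⟪x, u⟫) ∂ν :=
          Measurable.lintegral_prod_right'
            (f := fun p : E × E => ENNReal.ofReal (1 - Real.cos ⟪p.1, p.2⟫)) (by fun_prop)
        simp only [ofReal_integral_one_sub_cos_inner hν]
        exact (lintegral_map' hF.aemeasurable hZ).symm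
    _ = ∫⁻ u, ∫⁻ x, ENNReal.ofReal (1 - Real.cos ⟪x, u⟫) ∂(μ.map Z) ∂ν :=
        lintegral_lintegral_swap (by fun_prop)
    _ = ∫⁻ u, ENNReal.ofReal (1 - (charFun (μ.map Z) u).re) ∂ν := by
        simp only [lintegral_ofReal_one_sub_cos_inner_eq_re_charFun]

end CharFun

theorem negdef_exp_ineq_general
    {Ω : Type*} [MeasurableSpace Ω] {μ : Measure Ω} [IsProbabilityMeasure μ]
    (n : ℕ) (ν : Measure (EuclideanSpace ℝ (Fin n)))
    (hν : ∫⁻ u, ENNReal.ofReal (min (‖u‖ ^ 2) 1) ∂ν < ∞)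
    (ψ : EuclideanSpace ℝ (Fin n) → ℝ)
    (hψ : ∀ ξ, ψ ξ = ∫ u, (1 - Real.cos ⟪ξ, u⟫) ∂ν)
    (X Y : Ω → EuclideanSpace ℝ (Fin n))
    (hindep : IndepFun X Y μ) (hid : IdentDistrib X Y μ μ) :
    ∫⁻ ω, ENNReal.ofReal (ψ (X ω - Y ω)) ∂μ
      ≤ ∫⁻ ω, ENNReal.ofReal (ψ (X ω + Y ω)) ∂μ := by
  have hX := hid.aemeasurable_fst
  have hY := hid.aemeasurable_snd
  simp only [hψ]
  rw [lintegral_ofReal_integral_one_sub_cos_inner_comp hν (Z := fun ω => X ω - Y ω) (hX.sub hY),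
    lintegral_ofReal_integral_one_sub_cos_inner_comp hν (Z := fun ω => X ω + Y ω) (hX.add hY)]
  exact lintegral_mono fun u => ENNReal.ofReal_le_ofReal
    (sub_le_sub_left (hid.re_charFun_map_add_le_re_charFun_map_sub hindep u) 1)

theorem negdef_exp_ineq
    {Ω : Type*} [MeasurableSpace Ω] {μ : Measure Ω} [IsProbabilityMeasure μ]
    (n : ℕ) (ν : Measure (EuclideanSpace ℝ (Fin n)))
    (hν0 : ν {0} = 0)
    (hν : ∫⁻ u, ENNReal.ofReal (min (‖u‖ ^ 2) 1) ∂ν < ∞)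
    (ψ : EuclideanSpace ℝ (Fin n) → ℝ)
    (hψ : ∀ ξ, ψ ξ = ∫ u, (1 - Real.cos ⟪ξ, u⟫) ∂ν)
    (X Y : Ω → EuclideanSpace ℝ (Fin n))
    (hindep : IndepFun X Y μ) (hid : IdentDistrib X Y μ μ) :
    ∫⁻ ω, ENNReal.ofReal (ψ (X ω - Y ω)) ∂μ
      ≤ ∫⁻ ω, ENNReal.ofReal (ψ (X ω + Y ω)) ∂μ :=
  negdef_exp_ineq_general n ν hν ψ hψ X Y hindep hid
end

section
/- Let ψ(ξ) = ∫_{ℝⁿ∖{0}} (1 - cos⟨ξ,u⟩) ν(du) with ν a Lévy measure, let X₁,…,X_{2m} be i.i.d. ℝⁿ-valued random vectors, and let ε₁,…,ε_{2m} ∈ {−1,+1} be constants with ∑εⱼ = 0. Then E ψ(∑ εⱼ Xⱼ) ≤ E ψ(∑ Xⱼ). -/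
/-!
By Tonelli, `E ψ(S) = ∫ (1 - Re φ_S(u)) ν(du)` for every random vector `S`, where `φ_S` is the
characteristic function of `S`; this needs `1 - cos ⟪ξ, ·⟫` to be `ν`-integrable and `ν` to be
σ-finite, both consequences of the Lévy condition and `ν {0} = 0`. If `φ` is the common
characteristic function of the `Xⱼ`, independence gives `φ_{∑ Xⱼ} = φ ^ 2m`, while
`φ(-u) = conj φ(u)` and the fact that exactly `m` of the signs are `+1` give
`φ_{∑ εⱼ Xⱼ} = φ ^ m * conj φ ^ m = |φ| ^ 2m`, which dominates `Re φ ^ 2m`.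
-/

open MeasureTheory ProbabilityTheory
open scoped ENNReal RealInnerProductSpace
open scoped Finset

lemma sigmaFinite_of_lintegral_ne_top {α : Type*} [MeasurableSpace α] {ν : Measure α}
    {f : α → ℝ≥0∞} (hf : Measurable f) (hfin : ∫⁻ x, f x ∂ν ≠ ∞) (h0 : ν {x | f x = 0} = 0) :
    SigmaFinite ν := by
  refine Measure.sigmaFinite_of_countable
    (S := insert {x | f x = 0} (Set.range fun k : ℕ => {x | ((k : ℝ≥0∞) + 1)⁻¹ ≤ f x}))
    ((Set.countable_range _).insert _) ?_ ?_
  · rintro s (rfl | ⟨k, rfl⟩)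
    · simp [h0]
    · exact (meas_ge_le_lintegral_div hf.aemeasurable (by simp) (by simp)).trans_lt
        (ENNReal.div_lt_top hfin (by simp))
  · refine Set.eq_univ_of_forall fun x => ?_
    by_cases hx : f x = 0
    · exact Set.mem_sUnion_of_mem hx (Set.mem_insert _ _)
    · obtain ⟨k, hk⟩ := ENNReal.exists_inv_nat_lt hx
      refine Set.mem_sUnion_of_mem ?_ (Set.mem_insert_of_mem _ ⟨k, rfl⟩)
      exact (ENNReal.inv_le_inv.2 le_self_add).trans hk.le

lemma Real.one_sub_cos_le_two_mul_min_sq_one (t : ℝ) : 1 - Real.cos t ≤ 2 * min (t ^ 2) 1 := by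
  rcases le_total (t ^ 2) 1 with h | h
  · rw [min_eq_left h]; nlinarith [Real.one_sub_sq_div_two_le_cos (x := t), sq_nonneg t]
  · rw [min_eq_right h]; linarith [Real.neg_one_le_cos t]

section
variable {E : Type*} [NormedAddCommGroup E] [MeasurableSpace E] [BorelSpace E]

lemma sigmaFinite_of_lintegral_min_sq_norm_one_lt_top {ν : Measure E} (hν0 : ν {0} = 0)
    (hν : ∫⁻ u, ENNReal.ofReal (min (‖u‖ ^ 2) 1) ∂ν < ∞) : SigmaFinite ν := by
  refine sigmaFinite_of_lintegral_ne_top (by fun_prop) hν.ne ?_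
  convert hν0
  ext u
  simp

variable [InnerProductSpace ℝ E]

lemma integrable_one_sub_cos_inner {ν : Measure E}
    (hν : ∫⁻ u, ENNReal.ofReal (min (‖u‖ ^ 2) 1) ∂ν < ∞) (ξ : E) :
    Integrable (fun u => 1 - Real.cos ⟪ξ, u⟫) ν := by
  have hmin : Integrable (fun u : E => min (‖u‖ ^ 2) 1) ν :=
    ⟨by fun_prop, (hasFiniteIntegral_iff_ofReal (ae_of_all _ fun u => by positivity)).2 hν⟩
  set c := max (‖ξ‖ ^ 2) 1
  refine (hmin.const_mul (2 * c)).mono' (by fun_prop) (ae_of_all _ fun u => ?_)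
  have hinner : ⟪ξ, u⟫ ^ 2 ≤ c * ‖u‖ ^ 2 := by
    calc ⟪ξ, u⟫ ^ 2 ≤ (‖ξ‖ * ‖u‖) ^ 2 := by
          rw [← sq_abs]; gcongr; exact abs_real_inner_le_norm ξ u
      _ ≤ c * ‖u‖ ^ 2 := by rw [mul_pow]; gcongr; exact le_max_left _ _
  rw [Real.norm_eq_abs, abs_of_nonneg (sub_nonneg.2 (Real.cos_le_one _))]
  calc 1 - Real.cos ⟪ξ, u⟫ ≤ 2 * min (⟪ξ, u⟫ ^ 2) 1 := Real.one_sub_cos_le_two_mul_min_sq_one _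
    _ ≤ 2 * min (c * ‖u‖ ^ 2) (c * 1) := by gcongr 2 * ?_; exact min_le_min hinner (by simp [c])
    _ = 2 * c * min (‖u‖ ^ 2) 1 := by rw [← mul_min_of_nonneg _ _ (by positivity)]; ring

lemma re_charFun (ρ : Measure E) [IsFiniteMeasure ρ] (u : E) :
    (charFun ρ u).re = ∫ x, Real.cos ⟪x, u⟫ ∂ρ := by
  rw [charFun_apply, ← RCLike.re_to_complex, ← integral_re]
  · simp [Complex.exp_ofReal_mul_I_re]
  · exact Integrable.of_bound (by fun_prop) 1
      (ae_of_all _ fun x => by simp [Complex.norm_exp_ofReal_mul_I])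

end

lemma Complex.re_pow_add_le_re_pow_mul_conj_pow (z : ℂ) (k : ℕ) :
    (z ^ (k + k)).re ≤ (z ^ k * (starRingEnd ℂ z) ^ k).re := by
  rw [← mul_pow, Complex.mul_conj, ← Complex.ofReal_pow, Complex.ofReal_re,
    Complex.normSq_eq_norm_sq, ← pow_mul, ← norm_pow, two_mul]
  exact Complex.re_le_norm _

lemma card_filter_eq_one_eq_card_filter_not_eq_one {ι : Type*} (s : Finset ι) {ε : ι → ℝ}
    (hε : ∀ j, ε j = 1 ∨ ε j = -1) (hsum : ∑ j ∈ s, ε j = 0) :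
    #{j ∈ s | ε j = 1} = #{j ∈ s | ¬ε j = 1} := by
  rw [← Finset.sum_filter_add_sum_filter_not s (fun j => ε j = 1),
    Finset.sum_congr rfl fun j hj => (Finset.mem_filter.1 hj).2,
    Finset.sum_congr rfl fun j hj => (hε j).resolve_left (Finset.mem_filter.1 hj).2] at hsum
  simp only [Finset.sum_const, nsmul_eq_mul, mul_one, mul_neg] at hsum
  exact_mod_cast add_neg_eq_zero.1 hsum

section
variable {E : Type*} [NormedAddCommGroup E] [InnerProductSpace ℝ E] [MeasurableSpace E]
  [BorelSpace E] [SecondCountableTopology E] {Ω : Type*} [MeasurableSpace Ω] {μ : Measure Ω}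

lemma lintegral_ofReal_one_sub_cos_inner [IsProbabilityMeasure μ] {S : Ω → E}
    (hS : AEMeasurable S μ) (u : E) :
    ∫⁻ ω, ENNReal.ofReal (1 - Real.cos ⟪S ω, u⟫) ∂μ
      = ENNReal.ofReal (1 - (charFun (μ.map S) u).re) := by
  have : IsProbabilityMeasure (μ.map S) := Measure.isProbabilityMeasure_map hS
  have hcos : Integrable (fun ω => Real.cos ⟪S ω, u⟫) μ :=
    Integrable.of_bound (by fun_prop : AEMeasurable _ μ).aestronglyMeasurable 1
      (ae_of_all _ fun ω => by simp [Real.abs_cos_le_one])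
  have hint : Integrable (fun ω => 1 - Real.cos ⟪S ω, u⟫) μ := (integrable_const 1).sub hcos
  rw [← ofReal_integral_eq_lintegral_ofReal hint
      (ae_of_all _ fun ω => sub_nonneg.2 (Real.cos_le_one _)),
    integral_sub (integrable_const 1) hcos, re_charFun, integral_map hS (by fun_prop)]
  simp

lemma lintegral_ofReal_integral_one_sub_cos_inner [IsProbabilityMeasure μ] {ν : Measure E}
    [SFinite ν] (hint : ∀ ξ, Integrable (fun u => 1 - Real.cos ⟪ξ, u⟫) ν) {S : Ω → E}
    (hS : AEMeasurable S μ) :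
    ∫⁻ ω, ENNReal.ofReal (∫ u, (1 - Real.cos ⟪S ω, u⟫) ∂ν) ∂μ
      = ∫⁻ u, ENNReal.ofReal (1 - (charFun (μ.map S) u).re) ∂ν := by
  have hmeas : AEMeasurable (fun p : Ω × E => ENNReal.ofReal (1 - Real.cos ⟪S p.1, p.2⟫))
      (μ.prod ν) := by
    have hm : Measurable fun q : E × E => ENNReal.ofReal (1 - Real.cos ⟪q.1, q.2⟫) := by fun_prop
    have hp : AEMeasurable (fun p : Ω × E => (S p.1, p.2)) (μ.prod ν) :=
      (hS.comp_quasiMeasurePreserving Measure.quasiMeasurePreserving_fst).prodMk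
        measurable_snd.aemeasurable
    exact (hm.comp_aemeasurable hp :)
  calc _ = ∫⁻ ω, ∫⁻ u, ENNReal.ofReal (1 - Real.cos ⟪S ω, u⟫) ∂ν ∂μ :=
        lintegral_congr fun ω => ofReal_integral_eq_lintegral_ofReal (hint _)
          (ae_of_all _ fun u => sub_nonneg.2 (Real.cos_le_one _))
    _ = ∫⁻ u, ∫⁻ ω, ENNReal.ofReal (1 - Real.cos ⟪S ω, u⟫) ∂μ ∂ν :=
        lintegral_lintegral_swap hmeas
    _ = _ := lintegral_congr fun u => lintegral_ofReal_one_sub_cos_inner hS u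

variable {ι : Type*} [Fintype ι] {X : ι → Ω → E}

lemma charFun_map_sum_smul (hX : ∀ j, AEMeasurable (X j) μ) (hindep : iIndepFun X μ)
    (ε : ι → ℝ) (u : E) :
    charFun (μ.map fun ω => ∑ j, ε j • X j ω) u = ∏ j, charFun (μ.map (X j)) (ε j • u) := by
  rw [iIndepFun.charFun_map_fun_sum_eq_prod (X := fun j ω => ε j • X j ω)
    (fun j => (hX j).const_smul (ε j))
    (hindep.comp _ fun j => measurable_const_smul (ε j)), Finset.prod_apply]
  exact Finset.prod_congr rfl fun j _ => charFun_map_smul_comp (hX j) (ε j) u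

lemma re_charFun_map_sum_le_re_charFun_map_sum_signs (hindep : iIndepFun X μ)
    (hid : ∀ j k, IdentDistrib (X j) (X k) μ μ) {ε : ι → ℝ} (hε : ∀ j, ε j = 1 ∨ ε j = -1)
    (hsum : ∑ j, ε j = 0) (u : E) :
    (charFun (μ.map fun ω => ∑ j, X j ω) u).re
      ≤ (charFun (μ.map fun ω => ∑ j, ε j • X j ω) u).re := by
  rcases isEmpty_or_nonempty ι with _ | ⟨⟨j₀⟩⟩
  · simp
  set z := charFun (μ.map (X j₀)) u
  have hX : ∀ j, AEMeasurable (X j) μ := fun j => (hid j j).aemeasurable_fst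
  have hlaw : ∀ j, μ.map (X j) = μ.map (X j₀) := fun j => (hid j j₀).map_eq
  have hcard := card_filter_eq_one_eq_card_filter_not_eq_one Finset.univ hε hsum
  have hplain : charFun (μ.map fun ω => ∑ j, X j ω) u
      = z ^ (#{j | ε j = 1} + #{j | ¬ε j = 1}) := by
    rw [Finset.card_filter_add_card_filter_not, iIndepFun.charFun_map_fun_sum_eq_prod hX hindep,
      Finset.prod_apply]
    simp [hlaw, z]
  have hsigned : charFun (μ.map fun ω => ∑ j, ε j • X j ω) u
      = z ^ #{j | ε j = 1} * (starRingEnd ℂ z) ^ #{j | ¬ε j = 1} := by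
    rw [charFun_map_sum_smul hX hindep,
      ← Finset.prod_filter_mul_prod_filter_not _ (fun j => ε j = 1)]
    congr 1
    · rw [Finset.prod_congr rfl fun j hj => by rw [(Finset.mem_filter.1 hj).2, one_smul, hlaw j]]
      simp [z]
    · rw [Finset.prod_congr rfl fun j hj => by
        rw [(hε j).resolve_left (Finset.mem_filter.1 hj).2, neg_one_smul, hlaw j, charFun_neg]]
      simp [z]
  rw [hplain, hsigned, ← hcard]
  exact Complex.re_pow_add_le_re_pow_mul_conj_pow z _

end

theorem negdef_exp_ineq_signs
    {Ω : Type*} [MeasurableSpace Ω] {μ : Measure Ω} [IsProbabilityMeasure μ]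
    (n : ℕ) (ν : Measure (EuclideanSpace ℝ (Fin n)))
    (hν0 : ν {0} = 0)
    (hν : ∫⁻ u, ENNReal.ofReal (min (‖u‖ ^ 2) 1) ∂ν < ∞)
    (ψ : EuclideanSpace ℝ (Fin n) → ℝ)
    (hψ : ∀ ξ, ψ ξ = ∫ u, (1 - Real.cos ⟪ξ, u⟫) ∂ν)
    (m : ℕ)
    (X : Fin (2 * m) → Ω → EuclideanSpace ℝ (Fin n))
    (hindep : iIndepFun X μ)
    (hid : ∀ j k, IdentDistrib (X j) (X k) μ μ)
    (ε : Fin (2 * m) → ℝ)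
    (hε : ∀ j, ε j = 1 ∨ ε j = -1)
    (hsum : ∑ j, ε j = 0) :
    ∫⁻ ω, ENNReal.ofReal (ψ (∑ j, ε j • X j ω)) ∂μ
      ≤ ∫⁻ ω, ENNReal.ofReal (ψ (∑ j, X j ω)) ∂μ := by
  have := sigmaFinite_of_lintegral_min_sq_norm_one_lt_top hν0 hν
  have hint := integrable_one_sub_cos_inner hν
  have hX : ∀ j, AEMeasurable (X j) μ := fun j => (hid j j).aemeasurable_fst
  simp only [hψ]
  rw [lintegral_ofReal_integral_one_sub_cos_inner hint (by fun_prop),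
    lintegral_ofReal_integral_one_sub_cos_inner hint (by fun_prop)]
  refine lintegral_mono fun u => ENNReal.ofReal_le_ofReal (sub_le_sub_left ?_ 1)
  exact re_charFun_map_sum_le_re_charFun_map_sum_signs hindep hid hε hsum u
end

section
/- For each α ∈ (0,2], the kernel K(ξ,η) = |ξ+η|^α − |ξ−η|^α on ℝ × ℝ is positive definite. -/
/-!
For `0 < α < 2` the substitution `t ↦ |x| t` gives
`∫₀^∞ (1 - cos (x t)) t^(-1-α) dt = c_α |x|^α` with `c_α > 0`, and
`(1 - cos ((ξ+η) t)) - (1 - cos ((ξ-η) t)) = 2 sin (ξ t) sin (η t)`, so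
`c_α (|ξ+η|^α - |ξ-η|^α) = ∫₀^∞ sin (ξ t) sin (η t) · 2 t^(-1-α) dt`:
an average of the rank-one positive kernels `sin (ξ t) sin (η t)`.
For `α = 2` the kernel is `4 ξ η`, itself of rank one.
-/

open MeasureTheory Set Real
open scoped ComplexConjugate

def IsPosDefKernel {X : Type*} (K : X → X → ℝ) : Prop :=
  ∀ (k : ℕ) (ξ : Fin k → X) (lam : Fin k → ℂ),
    0 ≤ (∑ j, ∑ l, (K (ξ j) (ξ l) : ℂ) * lam j * conj (lam l)).re

lemma re_sum_sum_ofReal_mul_mul_conj {k : ℕ} (A : Fin k → Fin k → ℝ) (lam : Fin k → ℂ) :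
    (∑ j, ∑ l, (A j l : ℂ) * lam j * conj (lam l)).re
      = ∑ j, ∑ l, A j l * (lam j * conj (lam l)).re := by
  simp only [Complex.re_sum, mul_assoc, Complex.re_ofReal_mul]

lemma sum_sum_mul_mul_re_mul_conj {k : ℕ} (a : Fin k → ℝ) (lam : Fin k → ℂ) :
    ∑ j, ∑ l, a j * a l * (lam j * conj (lam l)).re
      = Complex.normSq (∑ j, (a j : ℂ) * lam j) := by
  rw [← Complex.ofReal_re (Complex.normSq _), ← Complex.mul_conj, map_sum, Finset.sum_mul,
    Complex.re_sum]
  refine Finset.sum_congr rfl fun j _ => ?_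
  rw [Finset.mul_sum, Complex.re_sum]
  refine Finset.sum_congr rfl fun l _ => ?_
  rw [map_mul, Complex.conj_ofReal, ← Complex.re_ofReal_mul]
  congr 1
  push_cast
  ring

namespace IsPosDefKernel

variable {X : Type*}

lemma of_const_mul {K : X → X → ℝ} {c : ℝ} (hc : 0 < c)
    (h : IsPosDefKernel fun x y => c * K x y) : IsPosDefKernel K := by
  intro k ξ lam
  have := h k ξ lam
  rw [re_sum_sum_ofReal_mul_mul_conj] at this ⊢
  simp only [mul_assoc, ← Finset.mul_sum] at this
  exact (mul_nonneg_iff_of_pos_left hc).mp this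

lemma mul_self (f : X → ℝ) : IsPosDefKernel fun x y => f x * f y := by
  intro k ξ lam
  rw [re_sum_sum_ofReal_mul_mul_conj, sum_sum_mul_mul_re_mul_conj]
  exact Complex.normSq_nonneg _

lemma integral {T : Type*} [MeasurableSpace T] (μ : Measure T) (f : X → T → ℝ) (w : T → ℝ)
    (hw : 0 ≤ᵐ[μ] w) (hf : ∀ x y, Integrable (fun t => f x t * f y t * w t) μ) :
    IsPosDefKernel fun x y => ∫ t, f x t * f y t * w t ∂μ := by
  intro k ξ lam
  rw [re_sum_sum_ofReal_mul_mul_conj]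
  have hint : ∀ j l, Integrable
      (fun t => f (ξ j) t * f (ξ l) t * w t * (lam j * conj (lam l)).re) μ :=
    fun j l => (hf (ξ j) (ξ l)).mul_const _
  calc (0 : ℝ)
      ≤ ∫ t, w t * Complex.normSq (∑ j, (f (ξ j) t : ℂ) * lam j) ∂μ :=
        integral_nonneg_of_ae <| hw.mono fun t ht => mul_nonneg ht (Complex.normSq_nonneg _)
    _ = ∫ t, ∑ j, ∑ l, f (ξ j) t * f (ξ l) t * w t * (lam j * conj (lam l)).re ∂μ := by
        congr 1 with t
        rw [← sum_sum_mul_mul_re_mul_conj, Finset.mul_sum]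
        refine Finset.sum_congr rfl fun j _ => ?_
        rw [Finset.mul_sum]
        exact Finset.sum_congr rfl fun l _ => by ring
    _ = _ := by
        rw [integral_finsetSum _ fun j _ => integrable_finsetSum _ fun l _ => hint j l]
        refine Finset.sum_congr rfl fun j _ => ?_
        rw [integral_finsetSum _ fun l _ => hint j l]
        exact Finset.sum_congr rfl fun l _ => integral_mul_const _ _

end IsPosDefKernel

lemma integrableOn_one_sub_cos_mul_mul_rpow {α : ℝ} (hα : 0 < α) (hα2 : α < 2) (x : ℝ) :
    IntegrableOn (fun t => (1 - cos (x * t)) * t ^ (-1 - α)) (Ioi 0) := by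
  have hcont : ContinuousOn (fun t => (1 - cos (x * t)) * t ^ (-1 - α)) (Ioi 0) :=
    (by fun_prop : Continuous fun t => 1 - cos (x * t)).continuousOn.mul
      (continuousOn_id.rpow_const fun t ht => Or.inl ht.ne')
  have hnorm : ∀ t ∈ Ioi (0 : ℝ), ‖(1 - cos (x * t)) * t ^ (-1 - α)‖
      = (1 - cos (x * t)) * t ^ (-1 - α) := fun t ht =>
    Real.norm_of_nonneg (mul_nonneg (by linarith [cos_le_one (x * t)]) (rpow_nonneg ht.out.le _))
  rw [← Ioc_union_Ioi_eq_Ioi zero_le_one]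
  refine IntegrableOn.union ?_ ?_
  · -- near `0`, `1 - cos (x t) ≤ x² t² / 2` and `t ^ (1 - α)` is integrable since `α < 2`
    refine Integrable.mono' (g := fun t => x ^ 2 / 2 * t ^ (1 - α)) ?_
      ((hcont.mono Ioc_subset_Ioi_self).aestronglyMeasurable measurableSet_Ioc) ?_
    · exact ((intervalIntegrable_iff_integrableOn_Ioc_of_le zero_le_one).mp
        (intervalIntegral.intervalIntegrable_rpow' (by linarith))).const_mul _
    · refine (ae_restrict_iff' measurableSet_Ioc).2 (ae_of_all _ fun t ht => ?_)
      have ht0 : 0 < t := ht.1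
      rw [hnorm t ht0, show 1 - α = 2 + (-1 - α) by ring, rpow_add ht0, rpow_two]
      calc (1 - cos (x * t)) * t ^ (-1 - α) ≤ (x * t) ^ 2 / 2 * t ^ (-1 - α) := by
            gcongr; linarith [one_sub_sq_div_two_le_cos (x := x * t)]
        _ = _ := by ring
  · refine Integrable.mono' (g := fun t => 2 * t ^ (-1 - α))
      ((integrableOn_Ioi_rpow_of_lt (by linarith) zero_lt_one).const_mul 2)
      ((hcont.mono (Ioi_subset_Ioi zero_le_one)).aestronglyMeasurable measurableSet_Ioi) ?_
    refine (ae_restrict_iff' measurableSet_Ioi).2 (ae_of_all _ fun t ht => ?_)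
    have ht0 : 0 < t := zero_lt_one.trans ht
    rw [hnorm t ht0]
    gcongr
    linarith [neg_one_le_cos (x * t)]

noncomputable def oneSubCosIntegral (α : ℝ) : ℝ := ∫ t in Ioi 0, (1 - cos t) * t ^ (-1 - α)

lemma integral_one_sub_cos_mul_mul_rpow {α : ℝ} (hα : 0 < α) (x : ℝ) :
    ∫ t in Ioi 0, (1 - cos (x * t)) * t ^ (-1 - α) = |x| ^ α * oneSubCosIntegral α := by
  rcases eq_or_ne x 0 with rfl | hx
  · simp [zero_rpow hα.ne']
  have hb : 0 < |x| := abs_pos.2 hx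
  have hsubst :=
    integral_comp_mul_left_Ioi (fun s => (1 - cos s) * s ^ (-1 - α)) 0 hb
  rw [mul_zero] at hsubst
  calc ∫ t in Ioi 0, (1 - cos (x * t)) * t ^ (-1 - α)
      = ∫ t in Ioi 0, |x| ^ (1 + α) * ((1 - cos (|x| * t)) * (|x| * t) ^ (-1 - α)) := by
        refine setIntegral_congr_fun measurableSet_Ioi fun t (ht : 0 < t) => ?_
        rw [← cos_abs (x * t), abs_mul, abs_of_pos ht, mul_rpow hb.le ht.le, ← mul_assoc,
          mul_comm _ (1 - _), mul_assoc, ← mul_assoc (|x| ^ _), ← rpow_add hb]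
        simp
    _ = |x| ^ (1 + α) * |x|⁻¹ * oneSubCosIntegral α := by
        rw [integral_const_mul, hsubst, smul_eq_mul, mul_assoc]; rfl
    _ = |x| ^ α * oneSubCosIntegral α := by
        rw [← rpow_neg_one |x|, ← rpow_add hb, add_neg_cancel_comm]

lemma oneSubCosIntegral_pos {α : ℝ} (hα : 0 < α) (hα2 : α < 2) : 0 < oneSubCosIntegral α := by
  have hint := integrableOn_one_sub_cos_mul_mul_rpow hα hα2 1
  simp only [one_mul] at hint
  refine (setIntegral_pos_iff_support_of_nonneg_ae ?_ hint).2 ?_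
  · refine (ae_restrict_iff' measurableSet_Ioi).2 (ae_of_all _ fun t (ht : 0 < t) => ?_)
    exact mul_nonneg (by linarith [cos_le_one t]) (rpow_nonneg ht.le _)
  · refine lt_of_lt_of_le ?_ (measure_mono (s := Ioo 0 (2 * π)) fun t ht => ⟨?_, ht.1⟩)
    · simp [pi_pos]
    · have hcos : cos t ≠ 1 := fun h =>
        ht.1.ne' ((cos_eq_one_iff_of_lt_of_lt (by linarith [ht.1, two_pi_pos]) ht.2).1 h)
      exact mul_ne_zero (sub_ne_zero.2 hcos.symm) (rpow_pos_of_pos ht.1 _).ne'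

lemma sin_mul_sin_mul_two_mul_eq (x y t w : ℝ) :
    sin (x * t) * sin (y * t) * (2 * w)
      = (1 - cos ((x + y) * t)) * w - (1 - cos ((x - y) * t)) * w := by
  rw [add_mul, sub_mul x, cos_add, cos_sub]
  ring

lemma integrableOn_sin_mul_sin_mul_rpow {α : ℝ} (hα : 0 < α) (hα2 : α < 2) (x y : ℝ) :
    IntegrableOn (fun t => sin (x * t) * sin (y * t) * (2 * t ^ (-1 - α))) (Ioi 0) := by
  simp_rw [sin_mul_sin_mul_two_mul_eq]
  exact (integrableOn_one_sub_cos_mul_mul_rpow hα hα2 _).sub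
    (integrableOn_one_sub_cos_mul_mul_rpow hα hα2 _)

lemma integral_sin_mul_sin_mul_rpow {α : ℝ} (hα : 0 < α) (hα2 : α < 2) (x y : ℝ) :
    ∫ t in Ioi 0, sin (x * t) * sin (y * t) * (2 * t ^ (-1 - α))
      = oneSubCosIntegral α * (|x + y| ^ α - |x - y| ^ α) := by
  simp_rw [sin_mul_sin_mul_two_mul_eq]
  rw [integral_sub (integrableOn_one_sub_cos_mul_mul_rpow hα hα2 _)
    (integrableOn_one_sub_cos_mul_mul_rpow hα hα2 _), integral_one_sub_cos_mul_mul_rpow hα,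
    integral_one_sub_cos_mul_mul_rpow hα]
  ring

lemma isPosDefKernel_abs_add_rpow_sub_abs_sub_rpow {α : ℝ} (hα : 0 < α) (hα2 : α ≤ 2) :
    IsPosDefKernel fun x y : ℝ => |x + y| ^ α - |x - y| ^ α := by
  rcases hα2.lt_or_eq with hlt | rfl
  · refine IsPosDefKernel.of_const_mul (oneSubCosIntegral_pos hα hlt) ?_
    simp_rw [← integral_sin_mul_sin_mul_rpow hα hlt]
    exact IsPosDefKernel.integral _ (fun x t => sin (x * t)) _
      ((ae_restrict_iff' measurableSet_Ioi).2 (ae_of_all _ fun t (ht : 0 < t) => by positivity))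
      (integrableOn_sin_mul_sin_mul_rpow hα hlt)
  · have h : ∀ x y : ℝ, |x + y| ^ (2 : ℝ) - |x - y| ^ (2 : ℝ) = 2 * x * (2 * y) := fun x y => by
      simp only [rpow_two, sq_abs]
      ring
    simp_rw [h]
    exact IsPosDefKernel.mul_self _

theorem abs_pow_kernel_pos_def
    (α : ℝ) (hα : 0 < α) (hα2 : α ≤ 2)
    (K : ℝ → ℝ → ℝ) (hK : ∀ ξ η, K ξ η = |ξ + η| ^ α - |ξ - η| ^ α)
    (k : ℕ) (ξ : Fin k → ℝ) (lam : Fin k → ℂ) :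
    0 ≤ (∑ j, ∑ l, (K (ξ j) (ξ l) : ℂ) * lam j * conj (lam l)).re := by
  obtain rfl : K = fun x y => |x + y| ^ α - |x - y| ^ α := funext₂ hK
  exact isPosDefKernel_abs_add_rpow_sub_abs_sub_rpow hα hα2 k ξ lam
end

section
/- Let X, Y be i.i.d. bounded real random variables with essential supremum M and essential infimum m. Then the essential supremum of |X−Y| equals M − m, which is at most 2·max{|M|,|m|}, which equals the essential supremum of |X+Y|. In particular ‖X−Y‖_∞ ≤ ‖X+Y‖_∞. -/
/-!
Call `a` an essential supremum of `f` when `f ≤ a` a.e. and `{b < f}` has positive measure for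
every `b < a`. This passes to identically distributed functions and to pointwise maxima, and it
is additive on independent functions: `{b < f}` and `{b' < g}` are then independent events of
positive measure, so they meet in a set of positive measure. Now `|X - Y| = max (X - Y) (Y - X)`
and `|X + Y| = max (X + Y) (-X - Y)`, where `X`, `Y` have essential supremum `M` and `-X`, `-Y`
have essential supremum `-m`.
-/

open MeasureTheory ProbabilityTheory Filter

namespace MeasureTheory

variable {Ω : Type*} {mΩ : MeasurableSpace Ω} {μ : Measure Ω}

structure IsEssSup (f : Ω → ℝ) (μ : Measure Ω) (a : ℝ) : Prop where
  ae_le : ∀ᵐ ω ∂μ, f ω ≤ a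
  frequently_lt : ∀ b < a, ∃ᵐ ω ∂μ, b < f ω

namespace IsEssSup

variable {f g : Ω → ℝ} {a b : ℝ}

lemma isCoboundedUnder_le (hf : IsEssSup f μ a) : IsCoboundedUnder (· ≤ ·) (ae μ) f :=
  ⟨a - 1, fun c hc => by
    obtain ⟨ω, hlt, hle⟩ := ((hf.frequently_lt _ (sub_one_lt a)).and_eventually hc).exists
    exact hlt.le.trans hle⟩

lemma essSup_eq (hf : IsEssSup f μ a) : essSup f μ = a :=
  le_antisymm (essSup_le_of_ae_le a hf.ae_le hf.isCoboundedUnder_le)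
    (le_of_forall_lt_imp_le_of_dense fun b hb =>
      le_limsup_of_frequently_le ((hf.frequently_lt b hb).mono fun _ => le_of_lt) ⟨a, hf.ae_le⟩)

protected lemma max (hf : IsEssSup f μ a) (hg : IsEssSup g μ b) :
    IsEssSup (fun ω => max (f ω) (g ω)) μ (max a b) where
  ae_le := by
    filter_upwards [hf.ae_le, hg.ae_le] with ω hfω hgω
    exact max_le_max hfω hgω
  frequently_lt c hc := by
    rcases lt_max_iff.1 hc with hca | hcb
    · exact (hf.frequently_lt c hca).mono fun ω hω => hω.trans_le (le_max_left _ _)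
    · exact (hg.frequently_lt c hcb).mono fun ω hω => hω.trans_le (le_max_right _ _)

end IsEssSup

section Bounded

variable [NeZero μ] {f : Ω → ℝ}

lemma isEssSup_essSup (hf : IsBoundedUnder (· ≤ ·) (ae μ) f)
    (hf' : IsBoundedUnder (· ≥ ·) (ae μ) f) : IsEssSup f μ (essSup f μ) where
  ae_le := ae_le_essSup hf
  frequently_lt _ hb := frequently_lt_of_lt_limsup hf'.isCoboundedUnder_le hb

lemma isEssSup_neg_essInf (hf : IsBoundedUnder (· ≤ ·) (ae μ) f)
    (hf' : IsBoundedUnder (· ≥ ·) (ae μ) f) : IsEssSup (-f) μ (-essInf f μ) where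
  ae_le := (ae_essInf_le hf').mono fun _ h => neg_le_neg h
  frequently_lt _ hb := (frequently_lt_of_liminf_lt hf.isCoboundedUnder_ge
    (lt_neg_of_lt_neg hb)).mono fun _ h => lt_neg_of_lt_neg h

end Bounded

lemma MemLp.isBoundedUnder_abs_of_top {f : Ω → ℝ} (hf : MemLp f ⊤ μ) :
    IsBoundedUnder (· ≤ ·) (ae μ) (fun ω => |f ω|) := by
  have hfin := hf.eLpNorm_lt_top
  rw [eLpNorm_exponent_top, eLpNormEssSup_lt_top_iff_isBoundedUnder] at hfin
  exact NNReal.coe_mono.isBoundedUnder_le_comp hfin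

end MeasureTheory

namespace ProbabilityTheory

variable {Ω : Type*} {mΩ : MeasurableSpace Ω} {μ : Measure Ω}

lemma IdentDistrib.isEssSup {Ω' : Type*} {mΩ' : MeasurableSpace Ω'} {ν : Measure Ω'}
    {f : Ω → ℝ} {g : Ω' → ℝ} {a : ℝ} (h : IdentDistrib f g μ ν) (hf : IsEssSup f μ a) :
    IsEssSup g ν a where
  ae_le := h.ae_mem_snd measurableSet_Iic hf.ae_le
  frequently_lt b hb := by
    have hfb := hf.frequently_lt b hb
    rw [frequently_ae_iff] at hfb ⊢
    exact h.measure_mem_eq measurableSet_Ioi ▸ hfb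

lemma IndepFun.frequently_mem_and_mem {β γ : Type*} [MeasurableSpace β] [MeasurableSpace γ]
    {X : Ω → β} {Y : Ω → γ} (h : IndepFun X Y μ) {s : Set β} {t : Set γ}
    (hs : MeasurableSet s) (ht : MeasurableSet t) (hX : ∃ᵐ ω ∂μ, X ω ∈ s)
    (hY : ∃ᵐ ω ∂μ, Y ω ∈ t) : ∃ᵐ ω ∂μ, X ω ∈ s ∧ Y ω ∈ t := by
  rw [frequently_ae_iff] at hX hY ⊢
  exact (h.measure_inter_preimage_eq_mul s t hs ht).symm ▸ mul_ne_zero hX hY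

lemma IndepFun.isEssSup_add {f g : Ω → ℝ} {a b : ℝ} (h : IndepFun f g μ)
    (hf : IsEssSup f μ a) (hg : IsEssSup g μ b) : IsEssSup (f + g) μ (a + b) where
  ae_le := by
    filter_upwards [hf.ae_le, hg.ae_le] with ω hfω hgω
    exact add_le_add hfω hgω
  frequently_lt c hc := by
    obtain ⟨a', ha', b', hb', rfl⟩ : ∃ a' < a, ∃ b' < b, c = a' + b' :=
      ⟨a - (a + b - c) / 2, by linarith, c - (a - (a + b - c) / 2), by linarith, by ring⟩
    exact (h.frequently_mem_and_mem measurableSet_Ioi measurableSet_Ioi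
      (hf.frequently_lt a' ha') (hg.frequently_lt b' hb')).mono fun ω hω => add_lt_add hω.1 hω.2

end ProbabilityTheory

lemma max_add_self_neg_eq_two_mul_max_abs {M m : ℝ} (h : m ≤ M) :
    max (M + M) (-m + -m) = 2 * max |M| |m| := by
  rw [abs_eq_max_neg, abs_eq_max_neg]
  grind

theorem essSup_diff_le_essSup_sum_general
    {Ω : Type*} [MeasurableSpace Ω] {μ : Measure Ω} [IsProbabilityMeasure μ]
    (X Y : Ω → ℝ)
    (hindep : IndepFun X Y μ) (hid : IdentDistrib X Y μ μ)
    (hbdd : MemLp X ⊤ μ)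
    (M m : ℝ) (hM : M = essSup X μ) (hm : m = essInf X μ) :
    essSup (fun ω => |X ω - Y ω|) μ = M - m
      ∧ M - m ≤ 2 * max |M| |m|
      ∧ essSup (fun ω => |X ω + Y ω|) μ = 2 * max |M| |m|
      ∧ essSup (fun ω => |X ω - Y ω|) μ ≤ essSup (fun ω => |X ω + Y ω|) μ := by
  obtain ⟨hX_bddAbove, hX_bddBelow⟩ := isBoundedUnder_le_abs.1 hbdd.isBoundedUnder_abs_of_top
  have hX : IsEssSup X μ M := hM ▸ isEssSup_essSup hX_bddAbove hX_bddBelow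
  have hnegX : IsEssSup (-X) μ (-m) := hm ▸ isEssSup_neg_essInf hX_bddAbove hX_bddBelow
  have hY : IsEssSup Y μ M := hid.isEssSup hX
  have hnegY : IsEssSup (-Y) μ (-m) := (hid.comp measurable_neg).isEssSup hnegX
  have hmM : m ≤ M := by
    obtain ⟨ω, hXω, hnegXω⟩ := (hX.ae_le.and hnegX.ae_le).exists
    linarith [neg_le_neg_iff.1 hnegXω]
  have hdiff : essSup (fun ω => |X ω - Y ω|) μ = M - m := by
    convert (((hindep.comp measurable_id measurable_neg).isEssSup_add hX hnegY).max
      ((hindep.comp measurable_neg measurable_id).isEssSup_add hnegX hY)).essSup_eq using 2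
    · simp [abs_eq_max_neg, sub_eq_add_neg, add_comm]
    · simp [sub_eq_add_neg, add_comm]
  have hsum : essSup (fun ω => |X ω + Y ω|) μ = 2 * max |M| |m| := by
    rw [← max_add_self_neg_eq_two_mul_max_abs hmM]
    convert ((hindep.isEssSup_add hX hY).max
      ((hindep.comp measurable_neg measurable_neg).isEssSup_add hnegX hnegY)).essSup_eq using 2
    simp [abs_eq_max_neg, add_comm]
  have hle : M - m ≤ 2 * max |M| |m| := by
    linarith [le_abs_self M, neg_abs_le m, le_max_left |M| |m|, le_max_right |M| |m|]
  exact ⟨hdiff, hle, hsum, hdiff ▸ hsum ▸ hle⟩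

theorem essSup_diff_le_essSup_sum
    {Ω : Type*} [MeasurableSpace Ω] {μ : Measure Ω} [IsProbabilityMeasure μ]
    (X Y : Ω → ℝ) (hXm : Measurable X) (hYm : Measurable Y)
    (hindep : IndepFun X Y μ) (hid : IdentDistrib X Y μ μ)
    (hbdd : MemLp X ⊤ μ)
    (M m : ℝ) (hM : M = essSup X μ) (hm : m = essInf X μ) :
    essSup (fun ω => |X ω - Y ω|) μ = M - m
      ∧ M - m ≤ 2 * max |M| |m|
      ∧ essSup (fun ω => |X ω + Y ω|) μ = 2 * max |M| |m|
      ∧ essSup (fun ω => |X ω - Y ω|) μ ≤ essSup (fun ω => |X ω + Y ω|) μ :=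
  essSup_diff_le_essSup_sum_general X Y hindep hid hbdd M m hM hm
end

section
/- For every α > 2 there exist i.i.d. real random variables X, Y (taking only two values) such that E|X−Y|^α > E|X+Y|^α. -/
/-!
Let `X, Y` be i.i.d., equal to `-M` with probability `q = c / M` and to `1` otherwise. Then
`E|X - Y|^α - E|X + Y|^α = 2q(1-q)((M+1)^α - (M-1)^α) - q²(2M)^α - (1-q)²2^α`.
Bernoulli's inequality gives `(M+1)^α - (M-1)^α ≥ α M^(α-1)`, so for `q ≤ 1/2` the gain is at least
`q α M^(α-1) = c α M^(α-2)`, while the loss `q²(2M)^α` is `c² 2^α M^(α-2)`. For `c` small both are of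
order `M^(α-2)` with a positive net coefficient, and since `α > 2` this outgrows the bounded term
`(1-q)²2^α` as `M → ∞`.
-/

open MeasureTheory ProbabilityTheory Real Filter unitInterval

lemma rpow_add_mul_rpow_sub_one_le_add_one_rpow {α M : ℝ} (hα : 1 ≤ α) (hM : 0 < M) :
    M ^ α + α * M ^ (α - 1) ≤ (M + 1) ^ α := by
  have hBernoulli : 1 + α * M⁻¹ ≤ (1 + M⁻¹) ^ α :=
    one_add_mul_self_le_rpow_one_add (by linarith [inv_pos.2 hM]) hα
  calc M ^ α + α * M ^ (α - 1) = M ^ α * (1 + α * M⁻¹) := by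
        rw [rpow_sub_one hM.ne']; ring
    _ ≤ M ^ α * (1 + M⁻¹) ^ α := by gcongr
    _ = (M + 1) ^ α := by
        rw [← mul_rpow hM.le (by positivity), mul_add, mul_inv_cancel₀ hM.ne', mul_one]

lemma sub_one_rpow_add_mul_rpow_sub_one_le_add_one_rpow {α M : ℝ} (hα : 1 ≤ α) (hM : 1 ≤ M) :
    (M - 1) ^ α + α * M ^ (α - 1) ≤ (M + 1) ^ α := by
  have : (M - 1) ^ α ≤ M ^ α := by gcongr; linarith
  linarith [rpow_add_mul_rpow_sub_one_le_add_one_rpow hα (by linarith : 0 < M)]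

lemma twoPoint_moment_add_lt_moment_sub {α M q : ℝ} (hα : 1 ≤ α) (hM : 1 ≤ M) (hq₀ : 0 ≤ q)
    (hq : q ≤ 1 / 2) (hlarge : 2 ^ α < q * M * (α - q * M * 2 ^ α) * M ^ (α - 2)) :
    q * q * (2 * M) ^ α + 2 * (q * (1 - q)) * (M - 1) ^ α + (1 - q) * (1 - q) * 2 ^ α
      < 2 * (q * (1 - q)) * (M + 1) ^ α := by
  have hM₀ : 0 < M := by linarith
  have hpow_sub_one : M ^ (α - 1) = M ^ (α - 2) * M := by
    rw [← rpow_add_one hM₀.ne']; ring_nf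
  have hpow : (2 * M) ^ α = 2 ^ α * M ^ (α - 2) * M ^ 2 := by
    rw [mul_rpow zero_le_two hM₀.le, mul_assoc, ← rpow_natCast, ← rpow_add hM₀]; norm_num
  have hgain : 2 * (q * (1 - q)) * ((M - 1) ^ α + α * M ^ (α - 1))
      ≤ 2 * (q * (1 - q)) * (M + 1) ^ α := by
    gcongr
    · nlinarith
    · exact sub_one_rpow_add_mul_rpow_sub_one_le_add_one_rpow hα hM
  have hhalf : q * α * M ^ (α - 1) ≤ 2 * (q * (1 - q)) * (α * M ^ (α - 1)) := by
    have : 0 ≤ q * α * M ^ (α - 1) := by positivity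
    nlinarith
  have hbounded : (1 - q) * (1 - q) * 2 ^ α ≤ 2 ^ α := by
    have : (1 - q) * (1 - q) ≤ 1 := by nlinarith
    nlinarith [rpow_pos_of_pos two_pos α]
  rw [hpow]
  rw [hpow_sub_one] at hhalf hgain
  linarith

lemma exists_twoPoint_parameters {α : ℝ} (hα : 2 < α) :
    ∃ M q : ℝ, 1 ≤ M ∧ 0 < q ∧ q ≤ 1 / 2 ∧
      2 ^ α < q * M * (α - q * M * 2 ^ α) * M ^ (α - 2) := by
  -- `c = q * M` maximises `c * (α - c * 2 ^ α)`.
  set c := α / 2 / 2 ^ α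
  have hc : 0 < c := by positivity
  have hk : 0 < c * (α - c * 2 ^ α) := by
    have : c * 2 ^ α = α / 2 := div_mul_cancel₀ _ (rpow_pos_of_pos two_pos α).ne'
    rw [this]; nlinarith
  obtain ⟨M, hM₁, hMc, hlarge⟩ : ∃ M : ℝ,
      1 ≤ M ∧ 2 * c ≤ M ∧ 2 ^ α / (c * (α - c * 2 ^ α)) < M ^ (α - 2) :=
    ((eventually_ge_atTop 1).and ((eventually_ge_atTop (2 * c)).and
      ((tendsto_rpow_atTop (by linarith)).eventually_gt_atTop _))).exists
  have hM₀ : 0 < M := by linarith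
  refine ⟨M, c / M, hM₁, by positivity, ?_, ?_⟩
  · rw [div_le_iff₀ hM₀]; linarith
  · rwa [div_mul_cancel₀ c hM₀.ne', ← div_lt_iff₀' hk]

lemma integral_bernoulliMeasure_prod {X : Type*} [MeasurableSpace X] [MeasurableSingletonClass X]
    [Finite X] (x y : X) (p : I) (g : X → X → ℝ) :
    ∫ ω, g ω.1 ω.2 ∂(Ber(x, y, p).prod Ber(x, y, p))
      = p * p * g x x + p * (1 - p) * (g x y + g y x) + (1 - p) * (1 - p) * g y y := by
  rw [integral_prod _ .of_finite]
  simp only [integral_bernoulliMeasure, smul_eq_mul]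
  ring

lemma identDistrib_comp_fst_comp_snd {Ω β : Type*} [MeasurableSpace Ω] [MeasurableSpace β]
    {μ : Measure Ω} [IsProbabilityMeasure μ] {f : Ω → β} (hf : Measurable f) :
    IdentDistrib (fun ω ↦ f ω.1) (fun ω ↦ f ω.2) (μ.prod μ) (μ.prod μ) where
  aemeasurable_fst := (hf.comp measurable_fst).aemeasurable
  aemeasurable_snd := (hf.comp measurable_snd).aemeasurable
  map_eq := by
    rw [← Function.comp_def, ← Function.comp_def, ← Measure.map_map hf measurable_fst,
      ← Measure.map_map hf measurable_snd, Measure.map_fst_prod, Measure.map_snd_prod]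

section TwoPoint

variable {α M : ℝ} (q : I)

lemma integral_abs_add_rpow_twoPoint (hM : 1 ≤ M) :
    ∫ ω, |cond ω.1 (-M) 1 + cond ω.2 (-M) 1| ^ α ∂(Ber(true, false, q).prod Ber(true, false, q))
      = q * q * (2 * M) ^ α + 2 * (q * (1 - q)) * (M - 1) ^ α + (1 - q) * (1 - q) * 2 ^ α := by
  rw [integral_bernoulliMeasure_prod true false q (fun a b ↦ |cond a (-M) 1 + cond b (-M) 1| ^ α)]
  simp only [cond_true, cond_false]
  rw [show |-M + -M| = 2 * M by rw [abs_of_nonpos] <;> linarith,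
    show |-M + 1| = M - 1 by rw [abs_of_nonpos] <;> linarith,
    show |1 + -M| = M - 1 by rw [abs_of_nonpos] <;> linarith,
    show |(1 : ℝ) + 1| = 2 by norm_num]
  ring

lemma integral_abs_sub_rpow_twoPoint (hα : α ≠ 0) (hM : 1 ≤ M) :
    ∫ ω, |cond ω.1 (-M) 1 - cond ω.2 (-M) 1| ^ α ∂(Ber(true, false, q).prod Ber(true, false, q))
      = 2 * (q * (1 - q)) * (M + 1) ^ α := by
  rw [integral_bernoulliMeasure_prod true false q (fun a b ↦ |cond a (-M) 1 - cond b (-M) 1| ^ α)]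
  simp only [cond_true, cond_false, sub_self, abs_zero, zero_rpow hα]
  rw [show |-M - 1| = M + 1 by rw [abs_of_nonpos] <;> linarith,
    show |1 - -M| = M + 1 by rw [abs_of_nonneg] <;> linarith]
  ring

end TwoPoint

theorem counterexample_exists (α : ℝ) (hα : 2 < α) :
    ∃ (Ω : Type) (_ : MeasurableSpace Ω) (μ : Measure Ω) (_ : IsProbabilityMeasure μ)
      (X Y : Ω → ℝ),
      IndepFun X Y μ ∧ IdentDistrib X Y μ μ ∧
      (∃ u v : ℝ, ∀ ω, X ω = u ∨ X ω = v) ∧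
      (∫ ω, |X ω + Y ω| ^ α ∂μ) < ∫ ω, |X ω - Y ω| ^ α ∂μ := by
  obtain ⟨M, q, hM, hq₀, hq, hlarge⟩ := exists_twoPoint_parameters hα
  let q' : I := ⟨q, hq₀.le, by linarith⟩
  let ν : Measure Bool := Ber(true, false, q')
  have hf : Measurable fun b : Bool ↦ cond b (-M) 1 := .of_discrete
  refine ⟨Bool × Bool, inferInstance, ν.prod ν, inferInstance,
    fun ω ↦ cond ω.1 (-M) 1, fun ω ↦ cond ω.2 (-M) 1,
    indepFun_prod hf hf, identDistrib_comp_fst_comp_snd hf,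
    ⟨-M, 1, fun ⟨a, _⟩ ↦ by cases a <;> simp⟩, ?_⟩
  rw [integral_abs_add_rpow_twoPoint q' hM, integral_abs_sub_rpow_twoPoint q' (by linarith) hM]
  exact twoPoint_moment_add_lt_moment_sub (by linarith) hM hq₀.le hq hlarge
end

section
/- Fix α > 2 and 0 < c < 2^{2−α}·α. For M ≥ max{c,1}, let q = c/M, p = 1−q, and let X_M, Y_M be i.i.d. with P(X_M=1)=p and P(X_M=−M)=q. Then E|X_M−Y_M|^α − E|X_M+Y_M|^α ≥ M^{α−2}(4pαc − 2^α c²) − 2^α p², which is positive for all sufficiently large M. -/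
/-!
For the two-point law on `{1, -M}` with weights `p, q` both expectations are finite sums:
`E|X - Y|^α - E|X + Y|^α = 2pq((M + 1)^α - (M - 1)^α) - 2^α p² - q² (2M)^α`.
Midpoint convexity of `x ↦ x^(α - 1)` gives `(M + 1)^α - (M - 1)^α ≥ 2α M^(α - 1)`, and with
`q = c/M` this is the stated bound. Its leading term is `M^(α - 2) · c (4α - 2^α c)`, and
`c < 2^(2 - α) α` says exactly that `4α - 2^α c > 0`, so the bound tends to infinity with `M`.
-/

open MeasureTheory ProbabilityTheory Set Filter Topology

theorem two_mul_mul_rpow_sub_one_mul_le_add_rpow_sub_sub_rpow {α M t : ℝ} (hα : 2 ≤ α)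
    (ht : 0 ≤ t) (htM : t ≤ M) :
    2 * α * M ^ (α - 1) * t ≤ (M + t) ^ α - (M - t) ^ α := by
  set F : ℝ → ℝ := fun s => (M + s) ^ α - (M - s) ^ α - 2 * α * M ^ (α - 1) * s
  have hF : ∀ s, HasDerivAt F
      (α * (M + s) ^ (α - 1) + α * (M - s) ^ (α - 1) - 2 * α * M ^ (α - 1)) s := by
    intro s
    have hadd := ((hasDerivAt_id s).const_add M).rpow_const (p := α) (Or.inr (by linarith))
    have hsub := ((hasDerivAt_id s).const_sub M).rpow_const (p := α) (Or.inr (by linarith))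
    exact ((hadd.sub hsub).sub ((hasDerivAt_id s).const_mul (2 * α * M ^ (α - 1)))).congr_deriv
      (by simp only [id]; ring)
  have hmono : MonotoneOn F (Icc 0 M) := by
    refine monotoneOn_of_deriv_nonneg (convex_Icc 0 M)
      (fun s _ => (hF s).continuousAt.continuousWithinAt)
      (fun s _ => (hF s).differentiableAt.differentiableWithinAt) fun s hs => ?_
    rw [interior_Icc] at hs
    rw [(hF s).deriv]
    have hmid := (convexOn_rpow (p := α - 1) (by linarith)).2
      (x := M + s) (y := M - s) (by simp only [mem_Ici]; linarith [hs.1])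
      (by simp only [mem_Ici]; linarith [hs.2]) (by norm_num : (0 : ℝ) ≤ 1 / 2)
      (by norm_num : (0 : ℝ) ≤ 1 / 2) (by norm_num)
    simp only [smul_eq_mul] at hmid
    rw [show 1 / 2 * (M + s) + 1 / 2 * (M - s) = M by ring] at hmid
    nlinarith
  have := hmono (left_mem_Icc.2 (ht.trans htM)) ⟨ht, htM⟩ ht
  simp only [F] at this
  norm_num at this
  linarith

theorem tendsto_rpow_mul_sub_atTop {α c : ℝ} (hα : 2 < α) (hc0 : 0 < c) (hc : 2 ^ α * c < 4 * α) :
    Tendsto (fun M : ℝ => M ^ (α - 2) * (4 * (1 - c / M) * α * c - 2 ^ α * c ^ 2)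
      - 2 ^ α * (1 - c / M) ^ 2) atTop atTop := by
  have hq : Tendsto (fun M : ℝ => 1 - c / M) atTop (𝓝 1) := by
    simpa using (tendsto_const_nhds (x := (1 : ℝ))).sub
      ((tendsto_const_nhds (x := c)).div_atTop tendsto_id)
  have hbracket : Tendsto (fun M : ℝ => 4 * (1 - c / M) * α * c - 2 ^ α * c ^ 2) atTop
      (𝓝 (c * (4 * α - 2 ^ α * c))) := by
    convert ((hq.const_mul 4).mul_const α |>.mul_const c).sub_const (2 ^ α * c ^ 2) using 2
    ring
  exact ((tendsto_rpow_atTop (by linarith)).atTop_mul_pos (by nlinarith) hbracket).atTop_add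
    ((hq.pow 2).const_mul (2 ^ α)).neg

theorem le_add_rpow_sub_sub_rpow_of_two_point {α c M : ℝ} (hα : 2 ≤ α) (hc0 : 0 ≤ c)
    (hcM : c ≤ M) (hM1 : 1 ≤ M) :
    M ^ (α - 2) * (4 * (1 - c / M) * α * c - 2 ^ α * c ^ 2) - 2 ^ α * (1 - c / M) ^ 2
      ≤ 2 * (1 - c / M) * (c / M) * ((M + 1) ^ α - (M - 1) ^ α) - (1 - c / M) ^ 2 * 2 ^ α
        - (c / M) ^ 2 * (2 ^ α * M ^ α) := by
  have hM0 : 0 < M := by linarith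
  have hp : 0 ≤ 1 - c / M := by rw [sub_nonneg, div_le_one hM0]; exact hcM
  have hpow : M ^ α = M ^ (α - 2) * M ^ 2 := by
    rw [← Real.rpow_natCast, ← Real.rpow_add hM0]; norm_num
  have hkey := two_mul_mul_rpow_sub_one_mul_le_add_rpow_sub_sub_rpow hα zero_le_one hM1
  rw [show α - 1 = α - 2 + 1 by ring, Real.rpow_add_one hM0.ne', mul_one] at hkey
  have hgain := mul_le_mul_of_nonneg_left hkey (by positivity : 0 ≤ 2 * (1 - c / M) * (c / M))
  have hlin : 2 * (1 - c / M) * (c / M) * (2 * α * (M ^ (α - 2) * M))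
      = 4 * (1 - c / M) * α * c * M ^ (α - 2) := by field_simp; ring
  have hquad : (c / M) ^ 2 * (2 ^ α * (M ^ (α - 2) * M ^ 2)) = 2 ^ α * c ^ 2 * M ^ (α - 2) := by
    field_simp
  rw [hpow]
  linarith

namespace ProbabilityTheory

variable {Ω : Type*} [MeasurableSpace Ω] {μ : Measure Ω}

section

variable {β : Type*} [MeasurableSpace β] [MeasurableSingletonClass β]

theorem integral_comp_eq_sum_of_ae_mem [IsFiniteMeasure μ] {Z : Ω → β} (hZ : AEMeasurable Z μ)
    {s : Finset β} (hs : ∀ᵐ ω ∂μ, Z ω ∈ s) (f : β → ℝ) :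
    ∫ ω, f (Z ω) ∂μ = ∑ x ∈ s, μ.real (Z ⁻¹' {x}) * f x := by
  have hfiber : ∀ x, NullMeasurableSet (Z ⁻¹' {x}) μ :=
    fun x => hZ.nullMeasurable (measurableSet_singleton x)
  have hsum : (fun ω => f (Z ω)) =ᵐ[μ] fun ω => ∑ x ∈ s, (Z ⁻¹' {x}).indicator (fun _ => f x) ω := by
    filter_upwards [hs] with ω hω
    rw [Finset.sum_eq_single_of_mem (Z ω) hω,
      indicator_of_mem (show ω ∈ Z ⁻¹' {Z ω} from rfl)]
    exact fun x _ hx => indicator_of_notMem (Ne.symm hx) _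
  rw [integral_congr_ae hsum,
    integral_finsetSum _ fun x _ => (integrable_const (f x)).indicator₀ (hfiber x)]
  refine Finset.sum_congr rfl fun x _ => ?_
  rw [integral_indicator₀ (hfiber x), setIntegral_const, smul_eq_mul]

theorem IndepFun.integral_comp_eq_sum_sum_of_ae_mem [IsFiniteMeasure μ] {X Y : Ω → β}
    (hX : AEMeasurable X μ) (hY : AEMeasurable Y μ) (hXY : IndepFun X Y μ) {s : Finset β}
    (hXs : ∀ᵐ ω ∂μ, X ω ∈ s) (hYs : ∀ᵐ ω ∂μ, Y ω ∈ s) (φ : β → β → ℝ) :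
    ∫ ω, φ (X ω) (Y ω) ∂μ
      = ∑ x ∈ s, ∑ y ∈ s, μ.real (X ⁻¹' {x}) * μ.real (Y ⁻¹' {y}) * φ x y := by
  have hXYs : ∀ᵐ ω ∂μ, (X ω, Y ω) ∈ s ×ˢ s := by
    filter_upwards [hXs, hYs] with ω hx hy
    exact Finset.mem_product.2 ⟨hx, hy⟩
  rw [integral_comp_eq_sum_of_ae_mem (hX.prodMk hY) hXYs (fun z => φ z.1 z.2), Finset.sum_product]
  refine Finset.sum_congr rfl fun x _ => Finset.sum_congr rfl fun y _ => ?_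
  rw [← Set.singleton_prod_singleton, Set.mk_preimage_prod, measureReal_def,
    hXY.measure_inter_preimage_eq_mul _ _ (measurableSet_singleton x) (measurableSet_singleton y),
    ENNReal.toReal_mul, measureReal_def, measureReal_def]

variable [DecidableEq β] [IsProbabilityMeasure μ]

theorem ae_mem_pair_of_measure_preimage_add_eq_one {Z : Ω → β} (hZ : AEMeasurable Z μ)
    {a b : β} (hab : a ≠ b) (h : μ (Z ⁻¹' {a}) + μ (Z ⁻¹' {b}) = 1) :
    ∀ᵐ ω ∂μ, Z ω ∈ ({a, b} : Finset β) := by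
  have hpair : Z ⁻¹' {a} ∪ Z ⁻¹' {b} = {ω | Z ω ∈ ({a, b} : Finset β)} := by
    ext ω
    simp
  rw [ae_iff_measure_eq, ← hpair, measure_union₀ (hZ.nullMeasurable (measurableSet_singleton b))
    (Disjoint.aedisjoint ?_), h, measure_univ]
  · exact Set.disjoint_singleton.2 hab |>.preimage Z
  · rw [← hpair]
    exact (hZ.nullMeasurable (measurableSet_singleton a)).union
      (hZ.nullMeasurable (measurableSet_singleton b))

theorem IndepFun.integral_comp_of_two_point {X Y : Ω → β} (hXY : IndepFun X Y μ)
    (hid : IdentDistrib X Y μ μ) {a b : β} (hab : a ≠ b) {p q : ℝ} (hp : 0 ≤ p) (hq : 0 ≤ q)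
    (hpq : p + q = 1) (hXa : μ (X ⁻¹' {a}) = ENNReal.ofReal p)
    (hXb : μ (X ⁻¹' {b}) = ENNReal.ofReal q) (φ : β → β → ℝ) :
    ∫ ω, φ (X ω) (Y ω) ∂μ = p * p * φ a a + p * q * φ a b + q * p * φ b a + q * q * φ b b := by
  have hYa : μ (Y ⁻¹' {a}) = ENNReal.ofReal p :=
    (hid.measure_mem_eq (measurableSet_singleton a)).symm.trans hXa
  have hYb : μ (Y ⁻¹' {b}) = ENNReal.ofReal q :=
    (hid.measure_mem_eq (measurableSet_singleton b)).symm.trans hXb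
  have hmass : ENNReal.ofReal p + ENNReal.ofReal q = 1 := by
    rw [← ENNReal.ofReal_add hp hq, hpq, ENNReal.ofReal_one]
  rw [hXY.integral_comp_eq_sum_sum_of_ae_mem hid.aemeasurable_fst hid.aemeasurable_snd
    (ae_mem_pair_of_measure_preimage_add_eq_one hid.aemeasurable_fst hab (by rw [hXa, hXb, hmass]))
    (ae_mem_pair_of_measure_preimage_add_eq_one hid.aemeasurable_snd hab (by rw [hYa, hYb, hmass]))]
  simp only [Finset.sum_pair hab, measureReal_def, hXa, hXb, hYa, hYb, ENNReal.toReal_ofReal hp,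
    ENNReal.toReal_ofReal hq]
  ring

end

theorem IndepFun.integral_abs_sub_rpow_sub_integral_abs_add_rpow_of_two_point
    [IsProbabilityMeasure μ] {X Y : Ω → ℝ} (hXY : IndepFun X Y μ) (hid : IdentDistrib X Y μ μ)
    {a b : ℝ} (hab : a ≠ b) {p q : ℝ} (hp : 0 ≤ p) (hq : 0 ≤ q) (hpq : p + q = 1) (hXa : μ (X ⁻¹' {a}) = ENNReal.ofReal p)
    (hXb : μ (X ⁻¹' {b}) = ENNReal.ofReal q) {α : ℝ} (hα : α ≠ 0) :
    (∫ ω, |X ω - Y ω| ^ α ∂μ) - ∫ ω, |X ω + Y ω| ^ α ∂μ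
      = 2 * p * q * (|a - b| ^ α - |a + b| ^ α) - p ^ 2 * |2 * a| ^ α - q ^ 2 * |2 * b| ^ α := by
  rw [hXY.integral_comp_of_two_point hid hab hp hq hpq hXa hXb (fun x y => |x - y| ^ α),
    hXY.integral_comp_of_two_point hid hab hp hq hpq hXa hXb (fun x y => |x + y| ^ α)]
  simp only [sub_self, abs_zero, Real.zero_rpow hα, abs_sub_comm b a, add_comm b a, ← two_mul]
  ring

end ProbabilityTheory

theorem counterexample_bound (α c : ℝ) (hα : 2 < α)
    (hc0 : 0 < c) (hc : c < 2 ^ (2 - α) * α) :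
    (∀ M : ℝ, max c 1 ≤ M →
      ∀ (Ω : Type) (_ : MeasurableSpace Ω) (μ : Measure Ω), IsProbabilityMeasure μ →
        ∀ X Y : Ω → ℝ, IndepFun X Y μ → IdentDistrib X Y μ μ →
          μ {ω | X ω = 1} = ENNReal.ofReal (1 - c / M) →
          μ {ω | X ω = -M} = ENNReal.ofReal (c / M) →
          M ^ (α - 2) * (4 * (1 - c / M) * α * c - 2 ^ α * c ^ 2)
              - 2 ^ α * (1 - c / M) ^ 2
            ≤ (∫ ω, |X ω - Y ω| ^ α ∂μ) - ∫ ω, |X ω + Y ω| ^ α ∂μ)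
    ∧ ∃ M₀ : ℝ, ∀ M : ℝ, M₀ ≤ M → max c 1 ≤ M →
        0 < M ^ (α - 2) * (4 * (1 - c / M) * α * c - 2 ^ α * c ^ 2)
              - 2 ^ α * (1 - c / M) ^ 2 := by
  refine ⟨fun M hM Ω _ μ _ X Y hXY hid hX1 hXM => ?_, ?_⟩
  · have hM1 : 1 ≤ M := le_of_max_le_right hM
    have hM0 : 0 < M := by linarith
    have hq : 0 ≤ c / M := by positivity
    have hp : 0 ≤ 1 - c / M := by rw [sub_nonneg, div_le_one hM0]; exact le_of_max_le_left hM
    rw [hXY.integral_abs_sub_rpow_sub_integral_abs_add_rpow_of_two_point hid (a := 1) (b := -M)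
      (by linarith) hp hq (by ring) hX1 hXM (by linarith)]
    rw [sub_neg_eq_add, add_comm 1 M, abs_of_pos (by linarith), ← sub_eq_add_neg, abs_sub_comm,
      abs_of_nonneg (by linarith), mul_one, abs_two, mul_neg, abs_neg,
      abs_of_pos (by positivity : 0 < 2 * M), Real.mul_rpow zero_le_two hM0.le]
    exact le_add_rpow_sub_sub_rpow_of_two_point hα.le hc0.le (le_of_max_le_left hM) hM1
  · have hc' : 2 ^ α * c < 4 * α := by
      calc 2 ^ α * c < 2 ^ α * (2 ^ (2 - α) * α) := by gcongr
        _ = 4 * α := by rw [← mul_assoc, ← Real.rpow_add two_pos]; norm_num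
    obtain ⟨M₀, hM₀⟩ := eventually_atTop.1
      ((tendsto_rpow_mul_sub_atTop hα hc0 hc').eventually_gt_atTop 0)
    exact ⟨M₀, fun M hM _ => hM₀ M hM⟩
end
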